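/- arXiv:1602.00636 — 5 statements merged into one kernel-verified Lean document; each statement's English description precedes it below -/
import Mathlib

section
/- If T is a bounded linear operator on a complex Banach space X that admits a decomposition X = X₁ ⊕ X₂ into closed T-invariant subspaces such that the restriction T|X₁ is semi-Fredholm and T|X₂ is quasi-nilpotent, then there exists ε > 0 such that T - λI is semi-Fredholm for all λ with 0 < |λ| < ε. -/
open Function Set

noncomputable section

namespace PseudoBF

variable {E : Type*} [NormedAddCommGroup E] [NormedSpace ℂ E]

/-- `M` is invariant under `T`. -/
def Inv (T : E →L[ℂ] E) (M : Submodule ℂ E) : Prop := ∀ x ∈ M, T x ∈ M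

/-- Restriction of `T` to a `T`-invariant submodule, as a continuous linear map. -/
def restr (T : E →L[ℂ] E) {M : Submodule ℂ E} (h : Inv T M) : M →L[ℂ] M where
  toLinearMap := (T : E →ₗ[ℂ] E).restrict h
  cont := (T.continuous.comp continuous_subtype_val).subtype_mk _

/-- Upper semi-Fredholm: finite dimensional kernel and closed range. -/
def UpperSemiFredholm (T : E →L[ℂ] E) : Prop :=
  FiniteDimensional ℂ (LinearMap.ker (T : E →ₗ[ℂ] E)) ∧ IsClosed (LinearMap.range (T : E →ₗ[ℂ] E) : Set E)

/-- Lower semi-Fredholm: range of finite codimension. -/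
def LowerSemiFredholm (T : E →L[ℂ] E) : Prop :=
  FiniteDimensional ℂ (E ⧸ LinearMap.range (T : E →ₗ[ℂ] E))

/-- Semi-Fredholm: upper or lower semi-Fredholm. -/
def SemiFredholm (T : E →L[ℂ] E) : Prop :=
  UpperSemiFredholm T ∨ LowerSemiFredholm T

/-- Quasi-nilpotent: spectral radius zero. -/
def QuasiNilpotentOp (T : E →L[ℂ] E) : Prop := spectralRadius ℂ T = 0

/-- Bounded below. -/
def BoundedBelow (T : E →L[ℂ] E) : Prop := ∃ c > 0, ∀ x, c * ‖x‖ ≤ ‖T x‖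

/-- Left invertible: bounded below with complemented closed range. -/
def LeftInvertibleOp (T : E →L[ℂ] E) : Prop :=
  BoundedBelow T ∧ IsClosed (LinearMap.range (T : E →ₗ[ℂ] E) : Set E) ∧
    ∃ P : Submodule ℂ E, IsClosed (P : Set E) ∧ IsCompl (LinearMap.range (T : E →ₗ[ℂ] E)) P

/-- Right invertible: surjective with complemented kernel. -/
def RightInvertibleOp (T : E →L[ℂ] E) : Prop :=
  Surjective T ∧ ∃ P : Submodule ℂ E, IsClosed (P : Set E) ∧ IsCompl (LinearMap.ker (T : E →ₗ[ℂ] E)) P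

/-- `T` decomposes as a direct sum, along closed invariant subspaces, of an operator
satisfying `P` and a quasi-nilpotent operator. -/
def Decomp (T : E →L[ℂ] E) (P : ∀ M : Submodule ℂ E, (M →L[ℂ] M) → Prop) : Prop :=
  ∃ (M N : Submodule ℂ E) (hM : Inv T M) (hN : Inv T N),
    IsClosed (M : Set E) ∧ IsClosed (N : Set E) ∧ IsCompl M N ∧
      P M (restr T hM) ∧ QuasiNilpotentOp (restr T hN)

def PseudoUpperSemiBFredholm (T : E →L[ℂ] E) : Prop :=
  Decomp T fun _ S => UpperSemiFredholm S

def PseudoLowerSemiBFredholm (T : E →L[ℂ] E) : Prop :=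
  Decomp T fun _ S => LowerSemiFredholm S

def PseudoSemiBFredholm (T : E →L[ℂ] E) : Prop :=
  Decomp T fun _ S => SemiFredholm S

def PseudoBFredholm (T : E →L[ℂ] E) : Prop :=
  Decomp T fun _ S => UpperSemiFredholm S ∧ LowerSemiFredholm S

def LeftGenDrazinInvertible (T : E →L[ℂ] E) : Prop :=
  Decomp T fun _ S => LeftInvertibleOp S

def RightGenDrazinInvertible (T : E →L[ℂ] E) : Prop :=
  Decomp T fun _ S => RightInvertibleOp S

def GenDrazinInvertible (T : E →L[ℂ] E) : Prop :=
  Decomp T fun _ S => IsUnit S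

def sigma_pBuF (T : E →L[ℂ] E) : Set ℂ :=
  {l | ¬ PseudoUpperSemiBFredholm (T - l • 1)}

def sigma_pBlF (T : E →L[ℂ] E) : Set ℂ :=
  {l | ¬ PseudoLowerSemiBFredholm (T - l • 1)}

def sigma_pBF (T : E →L[ℂ] E) : Set ℂ :=
  {l | ¬ PseudoBFredholm (T - l • 1)}

def sigma_lgD (T : E →L[ℂ] E) : Set ℂ :=
  {l | ¬ LeftGenDrazinInvertible (T - l • 1)}

def sigma_rgD (T : E →L[ℂ] E) : Set ℂ :=
  {l | ¬ RightGenDrazinInvertible (T - l • 1)}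

def sigma_gD (T : E →L[ℂ] E) : Set ℂ :=
  {l | ¬ GenDrazinInvertible (T - l • 1)}

/-- The approximate point spectrum. -/
def sigma_ap (T : E →L[ℂ] E) : Set ℂ := {l | ¬ BoundedBelow (T - l • 1)}

/-- The surjectivity spectrum. -/
def sigma_su (T : E →L[ℂ] E) : Set ℂ := {l | ¬ Surjective ⇑(T - l • 1)}

/-- `T` has the single valued extension property at `l0`. -/
def HasSVEPAt (T : E →L[ℂ] E) (l0 : ℂ) : Prop :=
  ∀ U : Set ℂ, IsOpen U → l0 ∈ U → ∀ f : ℂ → E, AnalyticOnNhd ℂ f U →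
    (∀ z ∈ U, T (f z) = z • f z) → ∀ z ∈ U, f z = 0

/-- The set where `T` fails to have the SVEP. -/
def S_ (T : E →L[ℂ] E) : Set ℂ := {l | ¬ HasSVEPAt T l}

/-- `l` is an accumulation point of `S`. -/
def IsAccPtOf (l : ℂ) (S : Set ℂ) : Prop :=
  ∀ ε > 0, ∃ μ ∈ S, μ ≠ l ∧ ‖μ - l‖ < ε

/-- The Banach-space adjoint of `T`, acting on the dual space. -/
def adj (T : E →L[ℂ] E) : StrongDual ℂ E →L[ℂ] StrongDual ℂ E :=
  (ContinuousLinearMap.compL ℂ E E ℂ).flip T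


/-!
For `λ ≠ 0` the quasi-nilpotent part `T|N - λ` is invertible. Hence `ker (T - λ) = ker (T|M - λ)`
and `range (T - λ)` is the preimage of `range (T|M - λ)` under the projection onto `M` along `N`,
so `T - λ` is semi-Fredholm as soon as `T|M - λ` is. The latter holds for small `|λ|`: an upper
semi-Fredholm operator is bounded below on a closed subspace of finite codimension, which survives
small perturbations; for a lower semi-Fredholm `A` with `range A + F = E`, `F` finite-dimensional,
the map `(x, f) ↦ (A - λ) x + f` stays surjective because surjective operators form an open set.
-/

open Filter Topology

section Surjective

variable {𝕜 X Y : Type*} [NontriviallyNormedField 𝕜] [NormedAddCommGroup X] [NormedSpace 𝕜 X]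
  [NormedAddCommGroup Y] [NormedSpace 𝕜 Y] [CompleteSpace X]

theorem _root_.ContinuousLinearMap.surjective_of_approx_preimage (g : X →L[𝕜] Y) {C : ℝ}
    (hC : 0 ≤ C) (h : ∀ y, ∃ x, ‖x‖ ≤ C * ‖y‖ ∧ ‖y - g x‖ ≤ 1 / 2 * ‖y‖) : Surjective g := by
  choose s hs_norm hs_approx using h
  intro y
  -- `q n` is the part of `y` not yet hit after the corrections `s (q 0), …, s (q (n - 1))`
  let q : ℕ → Y := fun n => (fun z => z - g (s z))^[n] y
  have hq_succ : ∀ n, q (n + 1) = q n - g (s (q n)) := fun n => iterate_succ_apply' _ n y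
  have hq_norm : ∀ n, ‖q n‖ ≤ (1 / 2) ^ n * ‖y‖ := by
    intro n
    induction n with
    | zero => simp [q]
    | succ n ih =>
      rw [hq_succ, pow_succ', mul_assoc]
      exact (hs_approx _).trans (by gcongr)
  have hsum : Summable fun n => s (q n) := by
    refine .of_norm_bounded (summable_geometric_two.mul_left (C * ‖y‖)) fun n => ?_
    calc ‖s (q n)‖ ≤ C * ‖q n‖ := hs_norm _
      _ ≤ C * ((1 / 2) ^ n * ‖y‖) := by gcongr; exact hq_norm n
      _ = C * ‖y‖ * (1 / 2) ^ n := by ring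
  have hq_zero : Tendsto q atTop (𝓝 0) := by
    refine squeeze_zero_norm hq_norm ?_
    simpa using (tendsto_pow_atTop_nhds_zero_of_lt_one (r := (1 / 2 : ℝ)) (by norm_num)
      (by norm_num)).mul_const ‖y‖
  have hpartial : ∀ n, ∑ i ∈ Finset.range n, g (s (q i)) = y - q n := fun n => by
    simp_rw [show ∀ i, g (s (q i)) = q i - q (i + 1) by intro i; rw [hq_succ]; abel]
    rw [Finset.sum_range_sub']
    rfl
  refine ⟨∑' n, s (q n), tendsto_nhds_unique (hsum.hasSum.mapL g).tendsto_sum_nat ?_⟩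
  simp_rw [hpartial]
  simpa using tendsto_const_nhds.sub hq_zero

theorem _root_.ContinuousLinearMap.isOpen_setOf_surjective [CompleteSpace Y] :
    IsOpen {f : X →L[𝕜] Y | Surjective f} := by
  refine Metric.isOpen_iff.mpr fun f hf => ?_
  obtain ⟨C, hC, hpre⟩ := f.exists_preimage_norm_le hf
  refine ⟨(2 * C)⁻¹, by positivity, fun g hg => g.surjective_of_approx_preimage hC.le fun y => ?_⟩
  obtain ⟨x, rfl, hx⟩ := hpre y
  refine ⟨x, hx, ?_⟩
  calc ‖f x - g x‖ = ‖(g - f) x‖ := by rw [← norm_neg]; simp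
    _ ≤ (2 * C)⁻¹ * (C * ‖f x‖) :=
      (g - f).le_of_opNorm_le_of_le (mem_ball_iff_norm.mp hg).le hx
    _ = 1 / 2 * ‖f x‖ := by field_simp

end Surjective

theorem _root_.Submodule.CoFG.comap_of_surjective {R M₁ M₂ : Type*} [Ring R] [AddCommGroup M₁]
    [Module R M₁] [AddCommGroup M₂] [Module R M₂] {f : M₁ →ₗ[R] M₂} (hf : Surjective f)
    {p : Submodule R M₂} (hp : p.CoFG) : (p.comap f).CoFG := by
  have hker : LinearMap.ker (p.mkQ ∘ₗ f) = p.comap f := by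
    rw [LinearMap.ker_comp, Submodule.ker_mkQ]
  rw [Submodule.CoFG, ← hker]
  exact Module.Finite.equiv ((p.mkQ ∘ₗ f).quotKerEquivOfSurjective
    (p.mkQ_surjective.comp hf)).symm

theorem upperSemiFredholm_of_mul_le_norm_on_cofg [CompleteSpace E] {B : E →L[ℂ] E}
    {M : Submodule ℂ E} [M.CoFG] (hMc : IsClosed (M : Set E))
    (hB : ∃ c > (0 : ℝ), ∀ x : M, c * ‖x‖ ≤ ‖B x‖) : UpperSemiFredholm B := by
  have : CompleteSpace M := hMc.completeSpace_coe
  obtain ⟨K, hK⟩ := (antilipschitzWith_iff_exists_mul_le_norm (f := B ∘L M.subtypeL)).mpr hB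
  have hdisj : Disjoint (LinearMap.ker (B : E →ₗ[ℂ] E)) M := by
    rw [Submodule.disjoint_def]
    intro x hxB hxM
    simpa using hK.injective (a₁ := ⟨x, hxM⟩) (a₂ := 0) (by simpa using hxB)
  refine ⟨Module.Finite.iff_fg.mpr (Submodule.CoFG.fg_of_disjoint hdisj inferInstance), ?_⟩
  refine LinearMap.isClosed_range_of_isClosed_map_of_finiteDimensional_quotient (s := M) ?_
  have hmap : (M.map (B : E →ₗ[ℂ] E) : Set E) = Set.range (B ∘L M.subtypeL) := by
    ext; simp
  rw [hmap]
  exact hK.isClosed_range (B ∘L M.subtypeL).uniformContinuous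

theorem UpperSemiFredholm.exists_cofg_mul_le_norm [CompleteSpace E] {A : E →L[ℂ] E}
    (hA : UpperSemiFredholm A) : ∃ M : Submodule ℂ E, M.CoFG ∧ IsClosed (M : Set E) ∧
      ∃ c > (0 : ℝ), ∀ x : M, c * ‖x‖ ≤ ‖A x‖ := by
  obtain ⟨hker, hrange⟩ := hA
  obtain ⟨M, hMc, hKM⟩ := (Submodule.ClosedComplemented.of_finiteDimensional
    (LinearMap.ker (A : E →ₗ[ℂ] E))).exists_isClosed_isCompl
  have : CompleteSpace M := hMc.completeSpace_coe
  have hinj : Injective (A ∘L M.subtypeL) := (injective_iff_map_eq_zero _).mpr fun x hx => by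
    have : (x : E) ∈ LinearMap.ker (A : E →ₗ[ℂ] E) ⊓ M := ⟨hx, x.2⟩
    simpa [hKM.inf_eq_bot] using this
  have hrange_eq : Set.range (A ∘L M.subtypeL) = LinearMap.range (A : E →ₗ[ℂ] E) := by
    ext y
    refine ⟨fun ⟨x, hx⟩ => ⟨x, hx⟩, ?_⟩
    rintro ⟨x, rfl⟩
    obtain ⟨k, hk, m, hm, rfl⟩ :=
      Submodule.mem_sup.mp (hKM.sup_eq_top ▸ Submodule.mem_top : x ∈ _ ⊔ M)
    exact ⟨⟨m, hm⟩, by simp [show A k = 0 from hk]⟩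
  obtain ⟨K, hK⟩ := (A ∘L M.subtypeL).antilipschitz_of_injective_of_isClosed_range hinj
    (hrange_eq ▸ hrange)
  exact ⟨M, (Module.Finite.iff_fg.mp hker).cofg_of_isCompl hKM, hMc,
    antilipschitzWith_iff_exists_mul_le_norm.mp ⟨K, hK⟩⟩

theorem UpperSemiFredholm.eventually_sub_smul_one [CompleteSpace E] {A : E →L[ℂ] E}
    (hA : UpperSemiFredholm A) : ∀ᶠ l in 𝓝 (0 : ℂ), UpperSemiFredholm (A - l • 1) := by
  obtain ⟨M, hM, hMc, c, hc, hbound⟩ := hA.exists_cofg_mul_le_norm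
  refine Metric.eventually_nhds_iff.mpr ⟨c / 2, half_pos hc, fun l hl =>
    upperSemiFredholm_of_mul_le_norm_on_cofg hMc ⟨c / 2, half_pos hc, fun x => ?_⟩⟩
  rw [dist_zero_right] at hl
  calc c / 2 * ‖x‖ ≤ c * ‖x‖ - ‖l‖ * ‖x‖ := by nlinarith [norm_nonneg x]
    _ ≤ ‖A x‖ - ‖l • (x : E)‖ := by rw [norm_smul]; gcongr; exacts [hbound x, le_rfl]
    _ ≤ ‖(A - l • 1) x‖ := by simpa using norm_sub_norm_le (A x) (l • (x : E))

theorem LowerSemiFredholm.eventually_sub_smul_one [CompleteSpace E] {A : E →L[ℂ] E}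
    (hA : LowerSemiFredholm A) : ∀ᶠ l in 𝓝 (0 : ℂ), LowerSemiFredholm (A - l • 1) := by
  obtain ⟨F, hF⟩ := Submodule.exists_isCompl (LinearMap.range (A : E →ₗ[ℂ] E))
  have hFfg : F.FG := Submodule.CoFG.fg_of_isCompl hF hA
  have : FiniteDimensional ℂ F := Module.Finite.iff_fg.mpr hFfg
  let Φ : ℂ → (E × F →L[ℂ] E) := fun l => (A - l • 1).coprod F.subtypeL
  have hrange : ∀ l, LinearMap.range (Φ l : E × F →ₗ[ℂ] E) =
      LinearMap.range ((A - l • 1 : E →L[ℂ] E) : E →ₗ[ℂ] E) ⊔ F := fun l => by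
    simp [Φ, LinearMap.range_coprod]
  have hΦ0 : Surjective (Φ 0) := LinearMap.range_eq_top.mp <| by
    rw [hrange]
    simpa using hF.sup_eq_top
  have hΦ : Continuous Φ := by
    have : Φ = fun l => Φ 0 - l • ContinuousLinearMap.fst ℂ E F := by
      ext l p <;> simp [Φ]
    rw [this]
    fun_prop
  filter_upwards [hΦ.continuousAt.eventually
    (ContinuousLinearMap.isOpen_setOf_surjective.mem_nhds hΦ0)] with l hl
  refine hFfg.cofg_of_codisjoint ?_
  rw [codisjoint_iff, sup_comm, ← hrange]
  exact LinearMap.range_eq_top.mpr hl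

@[simp]
theorem coe_restr_apply {T : E →L[ℂ] E} {M : Submodule ℂ E} (h : Inv T M) (x : M) :
    (restr T h x : E) = T x := rfl

theorem Inv.sub_smul_one {T : E →L[ℂ] E} {M : Submodule ℂ E} (h : Inv T M) (l : ℂ) :
    Inv (T - l • 1) M := fun x hx => M.sub_mem (h x hx) (M.smul_mem l hx)

theorem restr_sub_smul_one {T : E →L[ℂ] E} {M : Submodule ℂ E} (h : Inv T M) (l : ℂ) :
    restr (T - l • 1) (h.sub_smul_one l) = restr T h - l • 1 := rfl

theorem QuasiNilpotentOp.bijective_sub_smul_one [CompleteSpace E] {Q : E →L[ℂ] E}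
    (hQ : QuasiNilpotentOp Q) {l : ℂ} (hl : l ≠ 0) : Bijective (Q - l • (1 : E →L[ℂ] E)) := by
  have hres : l ∈ resolventSet ℂ Q :=
    spectrum.mem_resolventSet_of_spectralRadius_lt (by rw [hQ]; simpa using hl)
  rw [← ContinuousLinearMap.isUnit_iff_bijective, ← neg_sub, ← Algebra.algebraMap_eq_smul_one]
  exact hres.neg

section Decomposition

variable {T : E →L[ℂ] E} {M N : Submodule ℂ E}

theorem projectionOnto_apply_of_inv (hM : Inv T M) (hN : Inv T N) (hMN : IsCompl M N) (x : E) :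
    M.projectionOnto N hMN (T x) = restr T hM (M.projectionOnto N hMN x) := by
  obtain ⟨m, hm, n, hn, rfl⟩ :=
    Submodule.mem_sup.mp (hMN.sup_eq_top ▸ Submodule.mem_top : x ∈ M ⊔ N)
  ext
  simp [Submodule.projectionOnto_apply_of_mem_left hMN hm,
    Submodule.projectionOnto_apply_of_mem_left hMN (hM m hm),
    Submodule.projectionOnto_apply_of_mem_right hMN hn,
    Submodule.projectionOnto_apply_of_mem_right hMN (hN n hn)]

theorem ker_eq_map_ker_restr (hM : Inv T M) (hN : Inv T N) (hMN : IsCompl M N)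
    (hinj : Injective (restr T hN)) :
    LinearMap.ker (T : E →ₗ[ℂ] E) = (LinearMap.ker (restr T hM : M →ₗ[ℂ] M)).map M.subtype := by
  ext x
  refine ⟨fun hx => ?_, ?_⟩
  · have hPx : restr T hM (M.projectionOnto N hMN x) = 0 := by
      rw [← projectionOnto_apply_of_inv hM hN hMN, show T x = 0 from hx, map_zero]
    have hxN : x - M.projection N hMN x = 0 := by
      have hTPx : T (M.projection N hMN x) = 0 := by simpa using congrArg Subtype.val hPx
      have : restr T hN ⟨_, Submodule.sub_projection_mem hMN x⟩ = 0 := by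
        ext
        simp [hTPx, show T x = 0 from hx]
      simpa using congrArg Subtype.val (hinj (this.trans (map_zero _).symm))
    exact ⟨M.projectionOnto N hMN x, hPx, (sub_eq_zero.mp hxN).symm⟩
  · rintro ⟨m, hm, rfl⟩
    exact congrArg Subtype.val (LinearMap.mem_ker.mp hm)

theorem range_eq_comap_range_restr (hM : Inv T M) (hN : Inv T N) (hMN : IsCompl M N)
    (hsurj : Surjective (restr T hN)) :
    LinearMap.range (T : E →ₗ[ℂ] E) =
      (LinearMap.range (restr T hM : M →ₗ[ℂ] M)).comap (M.projectionOnto N hMN) := by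
  ext x
  refine ⟨?_, fun ⟨m, hm⟩ => ?_⟩
  · rintro ⟨y, rfl⟩
    exact ⟨M.projectionOnto N hMN y, (projectionOnto_apply_of_inv hM hN hMN y).symm⟩
  · obtain ⟨n, hn⟩ := hsurj ⟨_, Submodule.sub_projection_mem hMN x⟩
    refine ⟨m + n, ?_⟩
    have hm' : T m = M.projection N hMN x := congrArg Subtype.val hm
    have hn' : T n = x - M.projection N hMN x := congrArg Subtype.val hn
    simp [hm', hn']

theorem UpperSemiFredholm.of_restr [CompleteSpace E] (hM : Inv T M) (hN : Inv T N)
    (hMN : IsCompl M N) (hMc : IsClosed (M : Set E)) (hNc : IsClosed (N : Set E))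
    (hbij : Bijective (restr T hN)) (h : UpperSemiFredholm (restr T hM)) :
    UpperSemiFredholm T := by
  obtain ⟨hker, hrange⟩ := h
  refine ⟨?_, ?_⟩
  · rw [ker_eq_map_ker_restr hM hN hMN hbij.1]
    exact Module.Finite.map _ _
  · rw [range_eq_comap_range_restr hM hN hMN hbij.2, Submodule.comap_coe]
    exact hrange.preimage
      (Submodule.IsCompl.isTopCompl_of_isClosed hMN hMc hNc).continuous_projectionOnto

theorem LowerSemiFredholm.of_restr (hM : Inv T M) (hN : Inv T N) (hMN : IsCompl M N)
    (hsurj : Surjective (restr T hN)) (h : LowerSemiFredholm (restr T hM)) :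
    LowerSemiFredholm T := by
  rw [LowerSemiFredholm, range_eq_comap_range_restr hM hN hMN hsurj]
  exact Submodule.CoFG.comap_of_surjective (Submodule.projectionOnto_surjective hMN) h

theorem SemiFredholm.of_restr [CompleteSpace E] (hM : Inv T M) (hN : Inv T N)
    (hMN : IsCompl M N) (hMc : IsClosed (M : Set E)) (hNc : IsClosed (N : Set E))
    (hbij : Bijective (restr T hN)) (h : SemiFredholm (restr T hM)) : SemiFredholm T :=
  h.imp (UpperSemiFredholm.of_restr hM hN hMN hMc hNc hbij)
    (LowerSemiFredholm.of_restr hM hN hMN hbij.2)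

end Decomposition

theorem SemiFredholm.eventually_sub_smul_one [CompleteSpace E] {A : E →L[ℂ] E}
    (hA : SemiFredholm A) : ∀ᶠ l in 𝓝 (0 : ℂ), SemiFredholm (A - l • 1) :=
  hA.elim (fun h => h.eventually_sub_smul_one.mono fun _ => Or.inl)
    (fun h => h.eventually_sub_smul_one.mono fun _ => Or.inr)

theorem stmt0 [CompleteSpace E] (T : E →L[ℂ] E) (hT : PseudoSemiBFredholm T) :
    ∃ ε > (0 : ℝ), ∀ l : ℂ, 0 < ‖l‖ → ‖l‖ < ε → SemiFredholm (T - l • 1) := by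
  obtain ⟨M, N, hM, hN, hMc, hNc, hMN, hSF, hQ⟩ := hT
  have : CompleteSpace M := hMc.completeSpace_coe
  have : CompleteSpace N := hNc.completeSpace_coe
  obtain ⟨ε, hε, hstable⟩ := Metric.eventually_nhds_iff.mp hSF.eventually_sub_smul_one
  refine ⟨ε, hε, fun l hl0 hlε => ?_⟩
  refine SemiFredholm.of_restr (hM.sub_smul_one l) (hN.sub_smul_one l) hMN hMc hNc ?_ ?_
  · rw [restr_sub_smul_one hN]
    exact hQ.bijective_sub_smul_one (norm_pos_iff.mp hl0)
  · rw [restr_sub_smul_one hM]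
    exact hstable (by rwa [dist_zero_right])

end PseudoBF
end
end

section
/- There exist a bounded operator T and a finite rank operator F on ℓ²(ℕ) ⊕ ℓ²(ℕ) with TF = FT such that σ_{ap}(T) ≠ σ_{ap}(T + F). Concretely, with T = A ⊕ I where A is the unilateral right shift, and F = 0 ⊕ F_ε where F_ε(x₁,x₂,…) = (−εx₁,0,0,…) for some 0 < ε < 1, one has σ_{ap}(T) = {λ : |λ| = 1} while σ_{ap}(T+F) = {λ : |λ| = 1} ∪ {1 − ε}. -/
/-!
Both operators split along `H × H`, and the approximate point spectrum of `S ⊕ R` is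
`σ_ap(S) ∪ σ_ap(R)`. For the isometry `A`, `A - λ` is bounded below by `|1 - |λ||` off the unit
circle, while on it the vectors `x_N = ∑_{k ≤ N} λ⁻ᵏ eₖ` satisfy `‖(A - λ) x_N‖ ≤ 2` and
`‖x_N‖ = √(N + 1)`. The perturbation only changes the identity summand into the diagonal operator
`diag(1 - ε, 1, 1, …)`, whose approximate point spectrum is `{1, 1 - ε}`; for `0 < ε < 1` the new
point lies strictly inside the unit disc.
-/

open Function Set

noncomputable section

namespace PseudoBF

variable {E : Type*} [NormedAddCommGroup E] [NormedSpace ℂ E]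

abbrev H : Type := lp (fun _ : ℕ => ℂ) 2

open Filter ENNReal

section BoundedBelow

variable {G : Type*} [NormedAddCommGroup G] [NormedSpace ℂ G]

lemma not_boundedBelow_of_apply_eq_zero {T : E →L[ℂ] E} {x : E} (hx : x ≠ 0) (hTx : T x = 0) :
    ¬ BoundedBelow T := by
  rintro ⟨c, hc, hT⟩
  have := hT x
  rw [hTx, norm_zero] at this
  exact (mul_pos hc (norm_pos_iff.2 hx)).not_ge this

lemma not_boundedBelow_of_tendsto_norm {T : E →L[ℂ] E} {x : ℕ → E} {C : ℝ}
    (hTx : ∀ n, ‖T (x n)‖ ≤ C) (hx : Tendsto (fun n => ‖x n‖) atTop atTop) :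
    ¬ BoundedBelow T := by
  rintro ⟨c, hc, hT⟩
  obtain ⟨n, hn⟩ := (hx.eventually_gt_atTop (C / c)).exists
  rw [div_lt_iff₀' hc] at hn
  linarith [hT (x n), hTx n]

lemma boundedBelow_sub_smul_one_of_norm_ne_one {T : E →L[ℂ] E} (hT : ∀ x, ‖T x‖ = ‖x‖)
    {l : ℂ} (hl : ‖l‖ ≠ 1) : BoundedBelow (T - l • 1) := by
  refine ⟨|1 - ‖l‖|, abs_pos.2 (sub_ne_zero.2 hl.symm), fun x => ?_⟩
  calc |1 - ‖l‖| * ‖x‖ = |‖T x‖ - ‖l • x‖| := by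
        rw [hT, norm_smul, ← one_sub_mul, abs_mul, abs_norm]
    _ ≤ ‖T x - l • x‖ := abs_norm_sub_norm_le _ _
    _ = ‖(T - l • 1) x‖ := by simp

lemma boundedBelow_prodMap_iff {S : E →L[ℂ] E} {R : G →L[ℂ] G} :
    BoundedBelow (S.prodMap R) ↔ BoundedBelow S ∧ BoundedBelow R := by
  constructor
  · rintro ⟨c, hc, h⟩
    exact ⟨⟨c, hc, fun x => by simpa using h (x, 0)⟩, ⟨c, hc, fun y => by simpa using h (0, y)⟩⟩
  · rintro ⟨⟨c, hc, hS⟩, ⟨d, hd, hR⟩⟩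
    refine ⟨min c d, lt_min hc hd, fun x => ?_⟩
    rw [ContinuousLinearMap.coe_prodMap', Prod.map_apply, Prod.norm_def, Prod.norm_def,
      mul_max_of_nonneg _ _ (lt_min hc hd).le]
    exact max_le_max
      ((mul_le_mul_of_nonneg_right (min_le_left c d) (norm_nonneg _)).trans (hS _))
      ((mul_le_mul_of_nonneg_right (min_le_right c d) (norm_nonneg _)).trans (hR _))

lemma prodMap_sub_smul_one (S : E →L[ℂ] E) (R : G →L[ℂ] G) (l : ℂ) :
    S.prodMap R - l • 1 = (S - l • 1).prodMap (R - l • 1) := by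
  ext <;> simp

lemma sigma_ap_prodMap (S : E →L[ℂ] E) (R : G →L[ℂ] G) :
    sigma_ap (S.prodMap R) = sigma_ap S ∪ sigma_ap R := by
  ext l
  simp only [sigma_ap, mem_ofPred_eq, mem_union, prodMap_sub_smul_one, boundedBelow_prodMap_iff,
    not_and_or]

lemma sigma_ap_smul_one [Nontrivial E] (c : ℂ) : sigma_ap (c • 1 : E →L[ℂ] E) = {c} := by
  ext l
  simp only [sigma_ap, mem_ofPred_eq, mem_singleton_iff, ← sub_smul]
  constructor
  · intro h
    by_contra hl
    exact h ⟨‖c - l‖, norm_pos_iff.2 (sub_ne_zero.2 (Ne.symm hl)), fun x => by simp [norm_smul]⟩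
  · rintro rfl
    obtain ⟨x, hx⟩ := exists_ne (0 : E)
    exact not_boundedBelow_of_apply_eq_zero hx (by simp)

lemma boundedBelow_of_forall_norm_apply_le {α : Type*} {V : α → Type*}
    [∀ i, NormedAddCommGroup (V i)] [∀ i, NormedSpace ℂ (V i)] {p : ℝ≥0∞} [Fact (1 ≤ p)]
    {S : lp V p →L[ℂ] lp V p} {m : ℝ} (hm : 0 < m) (hS : ∀ x i, m * ‖x i‖ ≤ ‖S x i‖) :
    BoundedBelow S := by
  refine ⟨m, hm, fun x => ?_⟩
  calc m * ‖x‖ = ‖(m : ℂ) • x‖ := by rw [norm_smul, Complex.norm_real, Real.norm_of_nonneg hm.le]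
    _ ≤ ‖S x‖ := lp.norm_mono (zero_lt_one.trans_le Fact.out).ne' fun i => by
        rw [lp.coeFn_smul, Pi.smul_apply, norm_smul, Complex.norm_real, Real.norm_of_nonneg hm.le]
        exact hS x i

end BoundedBelow

lemma memℓp_shift {V : Type*} [NormedAddCommGroup V] {p : ℝ≥0∞} (hp : 0 < p.toReal)
    {f : ℕ → V} (hf : Memℓp f p) : Memℓp (fun n => if n = 0 then 0 else f (n - 1)) p := by
  rw [memℓp_gen_iff hp] at hf ⊢
  exact (summable_nat_add_iff 1).1 (by simpa using hf)

def shift : H →ₗᵢ[ℂ] H where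
  toFun f := ⟨fun n => if n = 0 then 0 else f (n - 1), memℓp_shift (by norm_num) (lp.memℓp f)⟩
  map_add' f g := by ext (_ | n); exacts [(add_zero 0).symm, rfl]
  map_smul' c f := by ext (_ | n); exacts [(smul_zero c).symm, rfl]
  norm_map' f := by
    set g : H := ⟨fun n => if n = 0 then 0 else f (n - 1), memℓp_shift (by norm_num) (lp.memℓp f)⟩
    have hp : 0 < (2 : ℝ≥0∞).toReal := by norm_num
    have hg : HasSum (fun n => ‖g n‖ ^ (2 : ℝ≥0∞).toReal) (‖f‖ ^ (2 : ℝ≥0∞).toReal) :=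
      (hasSum_nat_add_iff' 1).1 (by simpa [g, Real.zero_rpow hp.ne'] using lp.hasSum_norm hp f)
    exact (Real.rpow_left_inj (norm_nonneg _) (norm_nonneg _) hp.ne').1
      ((lp.hasSum_norm hp g).unique hg)

lemma shift_apply (f : H) (n : ℕ) : shift f n = if n = 0 then 0 else f (n - 1) := rfl

lemma shift_single (k : ℕ) (a : ℂ) : shift (lp.single 2 k a) = lp.single 2 (k + 1) a := by
  ext (_ | n) <;> simp [shift_apply, lp.single_apply, Pi.single_apply]

lemma shift_sub_smul_one_geom_sum {l : ℂ} (hl : l ≠ 0) (N : ℕ) :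
    (shift.toContinuousLinearMap - l • 1) (∑ k ∈ Finset.range (N + 1), lp.single 2 k (l⁻¹ ^ k)) =
      lp.single 2 (N + 1) (l⁻¹ ^ N) - lp.single 2 0 l := by
  have hsmul : ∀ k, l • lp.single 2 (k + 1) (l⁻¹ ^ (k + 1)) =
      (lp.single 2 (k + 1) (l⁻¹ ^ k) : H) := by
    intro k
    rw [← lp.single_smul, smul_eq_mul, pow_succ', ← mul_assoc, mul_inv_cancel₀ hl, one_mul]
  rw [sub_apply, smul_apply, one_apply_eq_self, LinearIsometry.coe_toContinuousLinearMap,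
    map_sum, Finset.smul_sum, Finset.sum_range_succ, Finset.sum_range_succ' (fun k => l • _)]
  simp only [shift_single, hsmul, pow_zero, ← lp.single_smul, smul_eq_mul, mul_one]
  abel

lemma not_boundedBelow_shift_sub_smul_one {l : ℂ} (hl : ‖l‖ = 1) :
    ¬ BoundedBelow (shift.toContinuousLinearMap - l • 1) := by
  have hl0 : l ≠ 0 := by rintro rfl; simp at hl
  set x : ℕ → H := fun N => ∑ k ∈ Finset.range (N + 1), lp.single 2 k (l⁻¹ ^ k)
  have hx : ∀ N, ‖x N‖ = √(N + 1) := fun N => by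
    have h := lp.norm_sum_single (p := 2) (by norm_num) (fun k => l⁻¹ ^ k) (Finset.range (N + 1))
    simp only [norm_pow, norm_inv, hl, inv_one, one_pow, toReal_ofNat,
      Finset.sum_const, Finset.card_range, nsmul_eq_mul, mul_one, Real.rpow_two] at h
    rw [← Real.sqrt_sq (norm_nonneg (x N))]
    exact_mod_cast congrArg Real.sqrt h
  refine not_boundedBelow_of_tendsto_norm (x := x) (C := 2) (fun N => ?_) ?_
  · rw [shift_sub_smul_one_geom_sum hl0]
    refine (norm_sub_le _ _).trans ?_
    simp [lp.norm_single, hl]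
    norm_num
  · simp only [hx]
    exact Real.tendsto_sqrt_atTop.comp
      (tendsto_atTop_add_const_right _ 1 tendsto_natCast_atTop_atTop)

lemma sigma_ap_shift : sigma_ap shift.toContinuousLinearMap = {l : ℂ | ‖l‖ = 1} := by
  ext l
  simp only [sigma_ap, mem_ofPred_eq]
  constructor
  · intro h
    by_contra hl
    exact h (boundedBelow_sub_smul_one_of_norm_ne_one (by simp) hl)
  · exact not_boundedBelow_shift_sub_smul_one

def headProj : H →L[ℂ] H := (lp.evalCLM ℂ (fun _ : ℕ => ℂ) 2 0).smulRight (lp.single 2 0 1)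

lemma headProj_apply (x : H) : headProj x = lp.single 2 0 (x 0) := by
  rw [headProj, ContinuousLinearMap.smulRight_apply, ← lp.single_smul, smul_eq_mul, mul_one]
  rfl

lemma one_add_smul_headProj_sub_smul_one_apply (c l : ℂ) (x : H) (n : ℕ) :
    ((1 + c • headProj - l • 1) x) n = ((if n = 0 then 1 + c else 1) - l) * x n := by
  simp only [sub_apply, add_apply, smul_apply, one_apply_eq_self, headProj_apply, lp.coeFn_sub,
    lp.coeFn_add, lp.coeFn_smul, Pi.sub_apply, Pi.add_apply, Pi.smul_apply, lp.single_apply,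
    smul_eq_mul]
  rcases n with _ | n <;> simp <;> ring

lemma lp_single_one_ne_zero (k : ℕ) : (lp.single 2 k (1 : ℂ) : H) ≠ 0 := by
  rw [← norm_ne_zero_iff, lp.norm_single (p := 2) (by norm_num)]
  simp

instance : Nontrivial H := ⟨_, _, lp_single_one_ne_zero 0⟩

lemma sigma_ap_one_add_smul_headProj (c : ℂ) : sigma_ap (1 + c • headProj) = {1, 1 + c} := by
  ext l
  simp only [sigma_ap, mem_ofPred_eq, mem_insert_iff, mem_singleton_iff]
  constructor
  · intro h
    by_contra! hl
    refine h (boundedBelow_of_forall_norm_apply_le (m := min ‖1 - l‖ ‖1 + c - l‖)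
      (lt_min (norm_pos_iff.2 (sub_ne_zero.2 hl.1.symm))
        (norm_pos_iff.2 (sub_ne_zero.2 hl.2.symm))) fun x n => ?_)
    rw [one_add_smul_headProj_sub_smul_one_apply, norm_mul]
    gcongr
    split_ifs
    exacts [min_le_right _ _, min_le_left _ _]
  · rintro (rfl | rfl)
    · refine not_boundedBelow_of_apply_eq_zero (lp_single_one_ne_zero 1)
        (lp.ext (funext fun n => ?_))
      rw [one_add_smul_headProj_sub_smul_one_apply]
      rcases n with _ | _ | n <;> simp
    · refine not_boundedBelow_of_apply_eq_zero (lp_single_one_ne_zero 0)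
        (lp.ext (funext fun n => ?_))
      rw [one_add_smul_headProj_sub_smul_one_apply]
      rcases n with _ | n <;> simp

lemma prodMap_zero_smul_headProj_apply (c : ℂ) (x : H × H) :
    (0 : H →L[ℂ] H).prodMap (c • headProj) x = (0, lp.single 2 0 (c * x.2 0)) := by
  show (0, c • headProj x.2) = _
  rw [headProj_apply, ← lp.single_smul, smul_eq_mul]

lemma finiteDimensional_range_prodMap_zero_smul_headProj (c : ℂ) :
    FiniteDimensional ℂ
      (LinearMap.range ((0 : H →L[ℂ] H).prodMap (c • headProj) : (H × H) →ₗ[ℂ] (H × H))) := by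
  refine Submodule.finiteDimensional_of_le
    (S₂ := Submodule.span ℂ {((0 : H), (lp.single 2 0 1 : H))}) ?_
  rintro _ ⟨x, rfl⟩
  refine Submodule.mem_span_singleton.2 ⟨c * x.2 0, ?_⟩
  rw [ContinuousLinearMap.coe_coe, prodMap_zero_smul_headProj_apply, Prod.smul_mk, smul_zero,
    ← lp.single_smul, smul_eq_mul, mul_one]

theorem stmt10 (ε : ℝ) (hε0 : 0 < ε) (hε1 : ε < 1) :
    ∃ T F : (H × H) →L[ℂ] (H × H),
      (∀ x : H × H, ∀ n : ℕ, (T x).1 n = if n = 0 then 0 else x.1 (n - 1)) ∧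
      (∀ x : H × H, (T x).2 = x.2) ∧
      (∀ x : H × H, (F x).1 = 0) ∧
      (∀ x : H × H, ∀ n : ℕ, (F x).2 n = if n = 0 then -(ε : ℂ) * x.2 0 else 0) ∧
      FiniteDimensional ℂ (LinearMap.range (F : (H × H) →ₗ[ℂ] (H × H))) ∧
      Commute T F ∧
      sigma_ap T = {l : ℂ | ‖l‖ = 1} ∧
      sigma_ap (T + F) = {l : ℂ | ‖l‖ = 1} ∪ {((1 - ε : ℝ) : ℂ)} ∧
      sigma_ap T ≠ sigma_ap (T + F) := by
  set A : H →L[ℂ] H := shift.toContinuousLinearMap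
  set P : H →L[ℂ] H := -(ε : ℂ) • headProj
  have hσT : sigma_ap (A.prodMap (1 : H →L[ℂ] H)) = {l : ℂ | ‖l‖ = 1} := by
    rw [sigma_ap_prodMap, sigma_ap_shift, ← one_smul ℂ (1 : H →L[ℂ] H), sigma_ap_smul_one]
    simp
  have hσTF : sigma_ap (A.prodMap (1 : H →L[ℂ] H) + (0 : H →L[ℂ] H).prodMap P) =
      {l : ℂ | ‖l‖ = 1} ∪ {((1 - ε : ℝ) : ℂ)} := by
    have hTF : A.prodMap (1 : H →L[ℂ] H) + (0 : H →L[ℂ] H).prodMap P = A.prodMap (1 + P) := by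
      ext <;> simp
    rw [hTF, sigma_ap_prodMap, sigma_ap_shift, sigma_ap_one_add_smul_headProj, union_insert,
      insert_eq_of_mem (mem_union_left _ (by simp)), Complex.ofReal_sub, Complex.ofReal_one,
      sub_eq_add_neg]
  refine ⟨A.prodMap 1, (0 : H →L[ℂ] H).prodMap P, fun x n => rfl, fun x => rfl, fun x => rfl,
    fun x n => ?_, finiteDimensional_range_prodMap_zero_smul_headProj _, ?_, hσT, hσTF, ?_⟩
  · rw [prodMap_zero_smul_headProj_apply, lp.single_apply]
    rcases n with _ | n <;> simp
  · ext x <;> simp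
  · rw [hσT, hσTF]
    intro h
    have h1ε : ((1 - ε : ℝ) : ℂ) ∈ {l : ℂ | ‖l‖ = 1} := h ▸ mem_union_right _ rfl
    rw [mem_ofPred_eq, Complex.norm_real, Real.norm_of_nonneg (by linarith)] at h1ε
    linarith

end PseudoBF
end
end

section
/- Let A ∈ B(X), B ∈ B(Y), C ∈ B(Y, X) and let M_C = [[A, C],[0, B]] be the upper triangular operator matrix on X ⊕ Y. If A is invertible, then M_C is left generalized Drazin invertible if and only if B is left generalized Drazin invertible. -/
open Function Set

noncomputable section

namespace PseudoBF

variable {E : Type*} [NormedAddCommGroup E] [NormedSpace ℂ E]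

def Mc {X Y : Type*} [NormedAddCommGroup X] [NormedSpace ℂ X]
    [NormedAddCommGroup Y] [NormedSpace ℂ Y]
    (A : X →L[ℂ] X) (B : Y →L[ℂ] Y) (C : Y →L[ℂ] X) : (X × Y) →L[ℂ] (X × Y) :=
  (A.comp (ContinuousLinearMap.fst ℂ X Y) + C.comp (ContinuousLinearMap.snd ℂ X Y)).prod
    (B.comp (ContinuousLinearMap.snd ℂ X Y))

/-!
A left generalized Drazin splitting of `T` is `T = T₁ ⊕ T₂` along closed invariant complements,
with `T₁` left invertible (on Banach spaces: having a continuous left inverse) and `T₂`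
quasinilpotent.

Given such a splitting `Y = M ⊕ N` for `B`, quasinilpotence of `B|_N` makes the Sylvester equation
`A D + C = D (B|_N)` solvable by the series `D = -∑ A⁻⁽ᵏ⁺¹⁾ C (B|_N)ᵏ`. Then
`X × Y = (X × M) ⊕ graph D`: on `X × M`, `M_C` is the upper triangular operator with diagonal
`A, B|_M`, left invertible since `B|_M` is, and on `graph D` it is a copy of `B|_N`.

Conversely, for a splitting `M' ⊕ N'` of `M_C`, the subspace `X × 0` lies in `M'`, since `M_C` is
invertible on it while `M_C|_{N'}` is quasinilpotent. Hence `M' = X × M` for a closed `M ⊆ Y`, and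
the projection to `Y` maps `N'` isomorphically onto a complement of `M`, splitting `B`.
-/

open ContinuousLinearMap Filter Topology

section General

variable {E F : Type*} [NormedAddCommGroup E] [NormedSpace ℂ E]
  [NormedAddCommGroup F] [NormedSpace ℂ F]

theorem leftInvertibleOp_of_hasLeftInverse {S : E →L[ℂ] E} (hS : S.HasLeftInverse) :
    LeftInvertibleOp S := by
  refine ⟨?_, hS.isClosed_range, hS.complement, hS.isClosed_complement, hS.isCompl_complement⟩
  obtain ⟨L, hL⟩ := hS
  refine ⟨(‖L‖ + 1)⁻¹, by positivity, fun x => ?_⟩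
  rw [inv_mul_le_iff₀ (by positivity)]
  calc ‖x‖ = ‖L (S x)‖ := by rw [hL x]
    _ ≤ ‖L‖ * ‖S x‖ := L.le_opNorm _
    _ ≤ (‖L‖ + 1) * ‖S x‖ := by gcongr; linarith

theorem LeftInvertibleOp.hasLeftInverse [CompleteSpace E] {S : E →L[ℂ] E}
    (hS : LeftInvertibleOp S) : S.HasLeftInverse := by
  obtain ⟨⟨c, hc, hbound⟩, hclosed, P, hP, hcompl⟩ := hS
  refine .of_injective_of_isClosed_range_of_closedComplement_range (fun x y hxy => ?_) hclosed
    (.of_isCompl_isClosed hcompl hclosed hP)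
  have h := hbound (x - y)
  rw [map_sub, hxy, sub_self, norm_zero] at h
  exact sub_eq_zero.mp (norm_le_zero_iff.mp (nonpos_of_mul_nonpos_right h hc))

theorem hasLeftInverse_of_intertwine (e : E ≃L[ℂ] F) {S : E →L[ℂ] E} {S' : F →L[ℂ] F}
    (h : ∀ x, S' (e x) = e (S x)) (hS : S.HasLeftInverse) : S'.HasLeftInverse := by
  obtain ⟨L, hL⟩ := hS
  refine ⟨(e : E →L[ℂ] F) ∘L L ∘L (e.symm : F →L[ℂ] E), fun y => ?_⟩
  obtain ⟨x, rfl⟩ := e.surjective y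
  simp [h, hL x]

theorem hasLeftInverse_iff_of_intertwine (e : E ≃L[ℂ] F) {S : E →L[ℂ] E} {S' : F →L[ℂ] F}
    (h : ∀ x, S' (e x) = e (S x)) : S.HasLeftInverse ↔ S'.HasLeftInverse :=
  ⟨hasLeftInverse_of_intertwine e h, hasLeftInverse_of_intertwine e.symm fun y => by
    rw [eq_comm, e.symm_apply_eq, ← h, e.apply_symm_apply]⟩

theorem quasiNilpotentOp_iff_of_intertwine (e : E ≃L[ℂ] F) {S : E →L[ℂ] E} {S' : F →L[ℂ] F}
    (h : ∀ x, S' (e x) = e (S x)) : QuasiNilpotentOp S ↔ QuasiNilpotentOp S' := by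
  have hconj : e.conjContinuousAlgEquiv S = S' := by
    ext y
    obtain ⟨x, rfl⟩ := e.surjective y
    simp [h]
  simp only [QuasiNilpotentOp, spectralRadius, ← hconj, AlgEquiv.spectrum_eq]

theorem norm_pow_apply_le (a : E →L[ℂ] E) (k : ℕ) (x : E) : ‖(a ^ k) x‖ ≤ ‖a‖ ^ k * ‖x‖ := by
  rcases Nat.eq_zero_or_pos k with rfl | hk
  · simp
  · exact le_opNorm_of_le _ le_rfl |>.trans (by gcongr; exact norm_pow_le' a hk)

theorem QuasiNilpotentOp.eventually_norm_pow_le [CompleteSpace E] {S : E →L[ℂ] E}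
    (hS : QuasiNilpotentOp S) {ε : ℝ} (hε : 0 < ε) : ∀ᶠ n in atTop, ‖S ^ n‖ ≤ ε ^ n := by
  have hgelfand := spectrum.pow_norm_pow_one_div_tendsto_nhds_spectralRadius S
  rw [show spectralRadius ℂ S = 0 from hS] at hgelfand
  filter_upwards [hgelfand.eventually_lt_const (ENNReal.ofReal_pos.mpr hε),
    eventually_ne_atTop 0] with n hn hn0
  rw [ENNReal.ofReal_lt_ofReal_iff hε, one_div] at hn
  rw [← Real.rpow_inv_natCast_pow (norm_nonneg _) hn0]
  exact pow_le_pow_left₀ (by positivity) hn.le n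

theorem QuasiNilpotentOp.summable_norm_pow_mul_pow [CompleteSpace E] {S : E →L[ℂ] E}
    (hS : QuasiNilpotentOp S) {r : ℝ} (hr : 0 ≤ r) : Summable fun n => ‖S ^ n‖ * r ^ n := by
  refine .of_norm_bounded_eventually_nat summable_geometric_two ?_
  filter_upwards [hS.eventually_norm_pow_le (ε := (2 * (r + 1))⁻¹) (by positivity)] with n hn
  rw [Real.norm_of_nonneg (by positivity)]
  calc ‖S ^ n‖ * r ^ n ≤ (2 * (r + 1))⁻¹ ^ n * (r + 1) ^ n := by gcongr; linarith
    _ = (1 / 2) ^ n := by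
      rw [← mul_pow, mul_inv, mul_assoc, inv_mul_cancel₀ (by positivity), mul_one, one_div]

theorem exists_continuousLinearEquiv_of_isUnit {A : E →L[ℂ] E} (hA : IsUnit A) :
    ∃ e : E ≃L[ℂ] E, (e : E →L[ℂ] E) = A :=
  ⟨.ofUnit hA.unit, rfl⟩

theorem exists_comp_add_eq_comp_of_quasiNilpotent [CompleteSpace E] [CompleteSpace F]
    {A : E →L[ℂ] E} (hA : IsUnit A) {S : F →L[ℂ] F} (hS : QuasiNilpotentOp S) (C : F →L[ℂ] E) :
    ∃ D : F →L[ℂ] E, A ∘L D + C = D ∘L S := by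
  obtain ⟨e, rfl⟩ := exists_continuousLinearEquiv_of_isUnit hA
  set A' : E →L[ℂ] E := (e.symm : E →L[ℂ] E)
  set g : ℕ → F →L[ℂ] E := fun k => (A' ^ k) ∘L C ∘L (S ^ k)
  have hg : Summable g := by
    refine .of_norm <| ((hS.summable_norm_pow_mul_pow (norm_nonneg A')).mul_left ‖C‖)
      |>.of_nonneg_of_le (fun _ => norm_nonneg _) fun k => opNorm_le_bound _ (by positivity)
        fun x => ?_
    calc ‖(A' ^ k) (C ((S ^ k) x))‖ ≤ ‖A'‖ ^ k * (‖C‖ * (‖S ^ k‖ * ‖x‖)) :=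
          (norm_pow_apply_le A' k _).trans (by gcongr; exact le_opNorm_of_le _ (le_opNorm _ _))
      _ = ‖C‖ * (‖S ^ k‖ * ‖A'‖ ^ k) * ‖x‖ := by ring
  -- `D = -A⁻¹ ∑ A⁻ᵏ C Sᵏ` telescopes: `A D + C = -∑_{k ≥ 1} A⁻ᵏ C Sᵏ = D S`.
  refine ⟨-(A' ∘L ∑' k, g k), ?_⟩
  have hshift : ∀ k, A' ∘L (g k ∘L S) = g (k + 1) := by
    intro k
    ext x
    simp only [g, pow_succ' A', pow_succ S, ContinuousLinearMap.comp_apply, mul_apply_eq_comp]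
  have hsum : ∑' k, g k = C + ∑' k, g (k + 1) := by
    rw [hg.tsum_eq_zero_add]
    ext
    simp [g]
  have hsumS : A' ∘L ((∑' k, g k) ∘L S) = ∑' k, g (k + 1) :=
    calc A' ∘L ((∑' k, g k) ∘L S) = ∑' k, A' ∘L (g k ∘L S) := by
          have hS' : (∑' k, g k) ∘L S = ∑' k, g k ∘L S := ((compL ℂ F F E).flip S).map_tsum hg
          rw [hS']
          exact (compL ℂ F E E A').map_tsum (hg.mapL ((compL ℂ F F E).flip S))
      _ = ∑' k, g (k + 1) := tsum_congr hshift
  have hAA' : ∀ T : F →L[ℂ] E, (e : E →L[ℂ] E) ∘L (A' ∘L T) = T := fun T => by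
    ext
    simp [A']
  rw [comp_neg, hAA', neg_comp, ContinuousLinearMap.comp_assoc, hsumS, hsum]
  abel

theorem leftGenDrazinInvertible_iff [CompleteSpace E] {T : E →L[ℂ] E} :
    LeftGenDrazinInvertible T ↔ ∃ (M N : Submodule ℂ E) (hM : Inv T M) (hN : Inv T N),
      M.IsTopCompl N ∧ (restr T hM).HasLeftInverse ∧ QuasiNilpotentOp (restr T hN) := by
  constructor
  · rintro ⟨M, N, hM, hN, hMc, hNc, hMN, hleft, hq⟩
    have := hMc.completeSpace_coe
    exact ⟨M, N, hM, hN, Submodule.IsCompl.isTopCompl_of_isClosed hMN hMc hNc,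
      hleft.hasLeftInverse, hq⟩
  · rintro ⟨M, N, hM, hN, hMN, hleft, hq⟩
    exact ⟨M, N, hM, hN, hMN.isClosed, hMN.isClosed', hMN.isCompl,
      leftInvertibleOp_of_hasLeftInverse hleft, hq⟩

theorem inv_range_of_intertwine {T : E →L[ℂ] E} (j : F →L[ℂ] E) {S : F →L[ℂ] F}
    (h : ∀ x, T (j x) = j (S x)) : Inv T j.range := by
  rintro _ ⟨x, rfl⟩
  exact ⟨S x, (h x).symm⟩

theorem exists_restr_range_intertwine [CompleteSpace E] [CompleteSpace F] {T : E →L[ℂ] E}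
    {j : F →L[ℂ] E} {S : F →L[ℂ] F} (hj : j.HasLeftInverse) (h : ∀ x, T (j x) = j (S x)) :
    ∃ e : F ≃L[ℂ] j.range, ∀ x, restr T (inv_range_of_intertwine j h) (e x) = e (S x) :=
  ⟨j.equivRange hj.injective hj.isClosed_range, fun x => Subtype.ext (h x)⟩

theorem hasLeftInverse_restr_congr {T : E →L[ℂ] E} {M₁ M₂ : Submodule ℂ E} (h : M₁ = M₂)
    (h₁ : Inv T M₁) (h₂ : Inv T M₂) :
    (restr T h₁).HasLeftInverse ↔ (restr T h₂).HasLeftInverse := by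
  subst h
  rfl

theorem projectionOntoL_apply_of_inv {T : E →L[ℂ] E} {M N : Submodule ℂ E} (hM : Inv T M)
    (hN : Inv T N) (hNM : N.IsTopCompl M) (v : E) :
    N.projectionOntoL M hNM (T v) = restr T hN (N.projectionOntoL M hNM v) := by
  obtain ⟨n, hn, m, hm, rfl⟩ :=
    Submodule.mem_sup.mp (hNM.isCompl.sup_eq_top ▸ Submodule.mem_top : v ∈ N ⊔ M)
  rw [map_add, map_add, map_add,
    Submodule.projectionOntoL_apply_eq_zero_of_mem_right hNM (hM m hm),
    Submodule.projectionOntoL_apply_eq_zero_of_mem_right hNM hm, add_zero, add_zero,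
    Submodule.projectionOntoL_apply_left hNM ⟨T n, hN n hn⟩,
    Submodule.projectionOntoL_apply_left hNM ⟨n, hn⟩]
  rfl

/-- The `N`-component of `j x = Tᵏ (j (aᵏ x))` is `(T|_N)ᵏ` applied to a vector of size
`O(‖a‖ᵏ)`, which tends to `0` by Gelfand's formula. -/
theorem apply_mem_of_intertwine_of_quasiNilpotent [CompleteSpace E] {T : E →L[ℂ] E}
    {M N : Submodule ℂ E} (hM : Inv T M) (hN : Inv T N) (hMN : M.IsTopCompl N)
    (hq : QuasiNilpotentOp (restr T hN)) {j : F →L[ℂ] E} {a : F →L[ℂ] F}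
    (h : ∀ x, T (j (a x)) = j x) (x : F) : j x ∈ M := by
  have := hMN.isClosed'.completeSpace_coe
  set Q := N.projectionOntoL M hMN.symm
  set S := restr T hN
  have hQ : ∀ k v, Q ((T ^ k) v) = (S ^ k) (Q v) := by
    intro k
    induction k with
    | zero => simp
    | succ k ih =>
      intro v
      rw [pow_succ', mul_apply_eq_comp, projectionOntoL_apply_of_inv hM hN, ih,
        ← mul_apply_eq_comp, ← pow_succ']
  have hT : ∀ k x, (T ^ k) (j ((a ^ k) x)) = j x := by
    intro k
    induction k with
    | zero => simp
    | succ k ih =>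
      intro x
      rw [pow_succ', pow_succ, mul_apply_eq_comp, mul_apply_eq_comp, ih, h]
  have hbound : ∀ k, ‖Q (j x)‖ ≤ ‖S ^ k‖ * ‖a‖ ^ k * (‖Q‖ * ‖j‖ * ‖x‖) := fun k =>
    calc ‖Q (j x)‖ = ‖(S ^ k) (Q (j ((a ^ k) x)))‖ := by rw [← hQ, hT]
      _ ≤ ‖S ^ k‖ * (‖Q‖ * (‖j‖ * (‖a‖ ^ k * ‖x‖))) :=
        le_opNorm_of_le _ (le_opNorm_of_le _ (le_opNorm_of_le _ (norm_pow_apply_le a k x)))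
      _ = ‖S ^ k‖ * ‖a‖ ^ k * (‖Q‖ * ‖j‖ * ‖x‖) := by ring
  have hlim : Tendsto (fun k => ‖S ^ k‖ * ‖a‖ ^ k * (‖Q‖ * ‖j‖ * ‖x‖)) atTop (𝓝 0) := by
    simpa using (hq.summable_norm_pow_mul_pow (norm_nonneg a)).tendsto_atTop_zero.mul_const
      (‖Q‖ * ‖j‖ * ‖x‖)
  have hQx : Q (j x) = 0 := norm_le_zero_iff.mp (ge_of_tendsto' hlim hbound)
  exact (Submodule.projectionOntoL_apply_eq_zero_iff _).mp hQx

end General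

section Mc

variable {X Y : Type*} [NormedAddCommGroup X] [NormedSpace ℂ X]
  [NormedAddCommGroup Y] [NormedSpace ℂ Y] {A : X →L[ℂ] X} {B : Y →L[ℂ] Y} {C : Y →L[ℂ] X}

@[simp]
theorem Mc_apply (A : X →L[ℂ] X) (B : Y →L[ℂ] Y) (C : Y →L[ℂ] X) (v : X × Y) :
    Mc A B C v = (A v.1 + C v.2, B v.2) :=
  rfl

theorem hasLeftInverse_Mc_iff (hA : IsUnit A) : (Mc A B C).HasLeftInverse ↔ B.HasLeftInverse := by
  obtain ⟨e, rfl⟩ := exists_continuousLinearEquiv_of_isUnit hA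
  constructor
  · rintro ⟨L, hL⟩
    refine ⟨snd ℂ X Y ∘L L ∘L inr ℂ X Y, fun y => ?_⟩
    have hy : Mc e B C (-e.symm (C y), y) = (0, B y) := by simp
    simpa [hy] using congrArg Prod.snd (hL (-e.symm (C y), y))
  · rintro ⟨L, hL⟩
    refine ⟨((e.symm : X →L[ℂ] X) ∘L (fst ℂ X Y - C ∘L L ∘L snd ℂ X Y)).prod (L ∘L snd ℂ X Y),
      fun v => ?_⟩
    simp [hL v.2]

theorem inv_comap_snd_iff {M : Submodule ℂ Y} :
    Inv (Mc A B C) (M.comap (LinearMap.snd ℂ X Y)) ↔ Inv B M :=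
  ⟨fun h y hy => h (0, y) hy, fun h v hv => h v.2 hv⟩

def prodEquivComapSnd (M : Submodule ℂ Y) : (X × M) ≃L[ℂ] M.comap (LinearMap.snd ℂ X Y) :=
  ContinuousLinearEquiv.equivOfInverse
    (((ContinuousLinearMap.id ℂ X).prodMap M.subtypeL).codRestrict _ fun v => v.2.2)
    ((fst ℂ X Y ∘L Submodule.subtypeL _).prod
      ((snd ℂ X Y ∘L Submodule.subtypeL _).codRestrict M fun v => v.2))
    (fun _ => rfl) (fun _ => rfl)

theorem hasLeftInverse_restr_Mc_comap_snd_iff (hA : IsUnit A) {M : Submodule ℂ Y} (hM : Inv B M)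
    (hM' : Inv (Mc A B C) (M.comap (LinearMap.snd ℂ X Y))) :
    (restr (Mc A B C) hM').HasLeftInverse ↔ (restr B hM).HasLeftInverse :=
  (hasLeftInverse_iff_of_intertwine (prodEquivComapSnd M)
    (S := Mc A (restr B hM) (C ∘L M.subtypeL)) fun _ => rfl).symm.trans (hasLeftInverse_Mc_iff hA)

end Mc

section ProdDecomposition

variable {X Y : Type*} [NormedAddCommGroup X] [NormedSpace ℂ X]
  [NormedAddCommGroup Y] [NormedSpace ℂ Y]

theorem isCompl_comap_snd_range_prod {M N : Submodule ℂ Y} (hMN : IsCompl M N)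
    (D : N →L[ℂ] X) : IsCompl (M.comap (LinearMap.snd ℂ X Y)) (D.prod N.subtypeL).range := by
  constructor
  · rw [Submodule.disjoint_def]
    rintro _ hv ⟨n, rfl⟩
    have hn : n = 0 := Subtype.ext (Submodule.disjoint_def.mp hMN.disjoint _ hv n.2)
    simp [hn]
  · rw [codisjoint_iff, eq_top_iff]
    rintro v -
    obtain ⟨m, hm, n, hn, hmn⟩ :=
      Submodule.mem_sup.mp (hMN.sup_eq_top ▸ Submodule.mem_top : v.2 ∈ M ⊔ N)
    refine Submodule.mem_sup.mpr ⟨(v.1 - D ⟨n, hn⟩, m), hm, _, ⟨⟨n, hn⟩, rfl⟩, ?_⟩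
    ext <;> simp [hmn]

variable {M' N' : Submodule ℂ (X × Y)}

theorem comap_snd_comap_inr_of_inl_mem (hX : ∀ x : X, (x, (0 : Y)) ∈ M') :
    (M'.comap (LinearMap.inr ℂ X Y)).comap (LinearMap.snd ℂ X Y) = M' := by
  ext v
  rw [Submodule.mem_comap, Submodule.mem_comap, ← Submodule.add_mem_iff_right M' (hX v.1)]
  simp

theorem isCompl_comap_inr_range_snd (hMN : IsCompl M' N') (hX : ∀ x : X, (x, (0 : Y)) ∈ M') :
    IsCompl (M'.comap (LinearMap.inr ℂ X Y)) (snd ℂ X Y ∘L N'.subtypeL).range := by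
  constructor
  · rw [Submodule.disjoint_def]
    rintro _ hv ⟨n, rfl⟩
    have hnM : (n : X × Y) ∈ M' := by
      rw [← comap_snd_comap_inr_of_inl_mem hX]
      exact hv
    simp [Submodule.disjoint_def.mp hMN.disjoint _ hnM n.2]
  · rw [codisjoint_iff, eq_top_iff]
    rintro y -
    obtain ⟨m, hm, n, hn, hmn⟩ :=
      Submodule.mem_sup.mp (hMN.sup_eq_top ▸ Submodule.mem_top : ((0 : X), y) ∈ M' ⊔ N')
    rw [← comap_snd_comap_inr_of_inl_mem hX] at hm
    exact Submodule.mem_sup.mpr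
      ⟨m.2, hm, n.2, ⟨⟨n, hn⟩, rfl⟩, by simpa using congrArg Prod.snd hmn⟩

theorem hasLeftInverse_snd_comp_subtypeL (hMN : M'.IsTopCompl N')
    (hX : ∀ x : X, (x, (0 : Y)) ∈ M') : (snd ℂ X Y ∘L N'.subtypeL).HasLeftInverse := by
  refine ⟨N'.projectionOntoL M' hMN.symm ∘L inr ℂ X Y, fun v => ?_⟩
  have hv : ((0 : X), (v : X × Y).2) = (v : X × Y) + (-(v : X × Y).1, 0) := by ext <;> simp
  simp only [ContinuousLinearMap.comp_apply, inr_apply, Submodule.subtypeL_apply, coe_snd', hv,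
    map_add, Submodule.projectionOntoL_apply_eq_zero_of_mem_right _ (hX _), add_zero]
  exact Submodule.projectionOntoL_apply_left _ v

end ProdDecomposition

section Directions

variable {X Y : Type*} [NormedAddCommGroup X] [NormedSpace ℂ X] [CompleteSpace X]
  [NormedAddCommGroup Y] [NormedSpace ℂ Y] [CompleteSpace Y]
  {A : X →L[ℂ] X} {B : Y →L[ℂ] Y} {C : Y →L[ℂ] X}

theorem LeftGenDrazinInvertible.upperTriangular (hA : IsUnit A) (hB : LeftGenDrazinInvertible B) :
    LeftGenDrazinInvertible (Mc A B C) := by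
  obtain ⟨M, N, hMB, hNB, hMN, hleft, hq⟩ := leftGenDrazinInvertible_iff.mp hB
  have := hMN.isClosed'.completeSpace_coe
  obtain ⟨D, hD⟩ := exists_comp_add_eq_comp_of_quasiNilpotent hA hq (C ∘L N.subtypeL)
  set j := D.prod N.subtypeL
  have hj : j.HasLeftInverse :=
    ⟨N.projectionOntoL M hMN.symm ∘L snd ℂ X Y, fun n => by simp [j]⟩
  have hjT : ∀ n, Mc A B C (j n) = j (restr B hNB n) := fun n =>
    Prod.ext (by simpa [j] using congrArg (· n) hD) rfl
  obtain ⟨e, he⟩ := exists_restr_range_intertwine hj hjT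
  have hM' : Inv (Mc A B C) (M.comap (LinearMap.snd ℂ X Y)) := inv_comap_snd_iff.mpr hMB
  refine leftGenDrazinInvertible_iff.mpr ⟨_, _, hM', inv_range_of_intertwine j hjT, ?_,
    (hasLeftInverse_restr_Mc_comap_snd_iff hA hMB hM').mpr hleft,
    (quasiNilpotentOp_iff_of_intertwine e he).mp hq⟩
  exact Submodule.IsCompl.isTopCompl_of_isClosed (isCompl_comap_snd_range_prod hMN.isCompl D)
    (hMN.isClosed.preimage continuous_snd) hj.isClosed_range

theorem LeftGenDrazinInvertible.of_upperTriangular (hA : IsUnit A)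
    (hT : LeftGenDrazinInvertible (Mc A B C)) : LeftGenDrazinInvertible B := by
  obtain ⟨M', N', hM', hN', hMN, hleft, hq⟩ := leftGenDrazinInvertible_iff.mp hT
  have := hMN.isClosed'.completeSpace_coe
  obtain ⟨eA, heA⟩ := exists_continuousLinearEquiv_of_isUnit hA
  have hX : ∀ x : X, (x, (0 : Y)) ∈ M' :=
    apply_mem_of_intertwine_of_quasiNilpotent hM' hN' hMN hq (j := inl ℂ X Y)
      (a := (eA.symm : X →L[ℂ] X)) fun x => by simp [← heA]
  set M := M'.comap (LinearMap.inr ℂ X Y)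
  have hM'eq : M.comap (LinearMap.snd ℂ X Y) = M' := comap_snd_comap_inr_of_inl_mem hX
  have hMM' : Inv (Mc A B C) (M.comap (LinearMap.snd ℂ X Y)) := hM'eq ▸ hM'
  have hMB := inv_comap_snd_iff.mp hMM'
  set j := snd ℂ X Y ∘L N'.subtypeL
  have hj := hasLeftInverse_snd_comp_subtypeL hMN hX
  have hjT : ∀ v, B (j v) = j (restr (Mc A B C) hN' v) := fun _ => rfl
  obtain ⟨e, he⟩ := exists_restr_range_intertwine hj hjT
  refine leftGenDrazinInvertible_iff.mpr ⟨M, j.range, hMB, inv_range_of_intertwine j hjT, ?_,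
    (hasLeftInverse_restr_Mc_comap_snd_iff hA hMB hMM').mp
      ((hasLeftInverse_restr_congr hM'eq.symm hM' hMM').mp hleft),
    (quasiNilpotentOp_iff_of_intertwine e he).mp hq⟩
  exact Submodule.IsCompl.isTopCompl_of_isClosed (isCompl_comap_inr_range_snd hMN.isCompl hX)
    (hMN.isClosed.preimage (inr ℂ X Y).continuous) hj.isClosed_range

end Directions

theorem stmt14 {X Y : Type*} [NormedAddCommGroup X] [NormedSpace ℂ X] [CompleteSpace X]
    [NormedAddCommGroup Y] [NormedSpace ℂ Y] [CompleteSpace Y]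
    (A : X →L[ℂ] X) (B : Y →L[ℂ] Y) (C : Y →L[ℂ] X) (hA : IsUnit A) :
    LeftGenDrazinInvertible (Mc A B C) ↔ LeftGenDrazinInvertible B :=
  ⟨LeftGenDrazinInvertible.of_upperTriangular hA, LeftGenDrazinInvertible.upperTriangular hA⟩

end PseudoBF
end
end

section
/- Let A be the unilateral right shift on ℓ²(ℕ), B = A* the left shift, and C = e₀ ⊗ e₀ the rank-one projection onto the first basis vector. Then the operator matrix M_C = [[A, C],[0, B]] on ℓ² ⊕ ℓ² is unitary; consequently 0 ∉ σ_{rgD}(M_C) while 0 ∈ σ_{rgD}(A) ∪ σ_{rgD}(B), so the inclusion σ_{rgD}(M_C) ⊆ σ_{rgD}(A) ∪ σ_{rgD}(B) can be strict. -/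
open Function Set

noncomputable section

namespace PseudoBF

variable {E : Type*} [NormedAddCommGroup E] [NormedSpace ℂ E]

/-!
An isometry `S` of a nonzero Banach space satisfies `‖S ^ n‖ = 1`, so its spectral radius is `1`.
Hence in a decomposition of an isometry witnessing right generalized Drazin invertibility the
quasi-nilpotent summand is zero, and the operator itself must be surjective. The right shift `A`
is an isometry that misses `e₀`, so `0 ∈ σ_rgD(A)`. The operator matrix `M` is an isometry, since
`C` puts back onto `e₀` exactly the coordinate that `B` forgets, and `(x, y) ↦ (B x, C x + A y)`
inverts it; being invertible, `M` is right generalized Drazin invertible.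
-/

lemma _root_.lp.hasSum_norm_sq {ι : Type*} {F : ι → Type*} [∀ i, NormedAddCommGroup (F i)]
    (f : lp F 2) : HasSum (fun i => ‖f i‖ ^ 2) (‖f‖ ^ 2) := by
  simpa using lp.hasSum_norm (p := 2) (by norm_num) f

lemma _root_.lp.hasSum_norm_sq_succ {F : ℕ → Type*} [∀ i, NormedAddCommGroup (F i)]
    (f : lp F 2) : HasSum (fun n => ‖f (n + 1)‖ ^ 2) (‖f‖ ^ 2 - ‖f 0‖ ^ 2) := by
  simpa using (hasSum_nat_add_iff' 1).mpr (lp.hasSum_norm_sq f)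

lemma spectralRadius_eq_one_of_norm_map [CompleteSpace E] [Nontrivial E] (S : E →L[ℂ] E)
    (hS : ∀ x, ‖S x‖ = ‖x‖) : spectralRadius ℂ S = 1 := by
  have hpow : ∀ n : ℕ, ‖S ^ n‖₊ = 1 := fun n => by
    have hSn : ∀ x, ‖(S ^ n) x‖ = ‖x‖ := by
      induction n with
      | zero => simp
      | succ n ih => intro x; rw [pow_succ, mul_apply_eq_comp, ih, hS]
    exact Subtype.ext (LinearIsometry.norm_toContinuousLinearMap ⟨((S ^ n : E →L[ℂ] E) : E →ₗ[ℂ] E), hSn⟩)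
  have h := spectrum.pow_nnnorm_pow_one_div_tendsto_nhds_spectralRadius S
  simp only [hpow, ENNReal.coe_one, ENNReal.one_rpow] at h
  exact tendsto_nhds_unique h tendsto_const_nhds

lemma quasiNilpotentOp_of_subsingleton [Subsingleton E] (S : E →L[ℂ] E) : QuasiNilpotentOp S := by
  simp [QuasiNilpotentOp, spectralRadius, spectrum.of_subsingleton]

lemma eq_bot_of_quasiNilpotentOp_restr [CompleteSpace E] {T : E →L[ℂ] E}
    (hT : ∀ x, ‖T x‖ = ‖x‖) {N : Submodule ℂ E} (hNc : IsClosed (N : Set E)) (hN : Inv T N)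
    (hq : QuasiNilpotentOp (restr T hN)) : N = ⊥ := by
  by_contra hne
  have : Nontrivial N := Submodule.nontrivial_iff_ne_bot.mpr hne
  have : CompleteSpace N := hNc.completeSpace_coe
  rw [QuasiNilpotentOp, spectralRadius_eq_one_of_norm_map (restr T hN) fun x => hT x] at hq
  exact one_ne_zero hq

lemma surjective_of_rightGenDrazinInvertible [CompleteSpace E] {T : E →L[ℂ] E}
    (hT : ∀ x, ‖T x‖ = ‖x‖) (hrgD : RightGenDrazinInvertible T) : Surjective T := by
  obtain ⟨M, N, hM, hN, -, hNc, hMN, ⟨hsurj, -⟩, hq⟩ := hrgD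
  have hMtop : M = ⊤ := by
    simpa [eq_bot_of_quasiNilpotentOp_restr hT hNc hN hq] using hMN.sup_eq_top
  intro u
  obtain ⟨w, hw⟩ := hsurj ⟨u, hMtop ▸ Submodule.mem_top⟩
  exact ⟨w, congrArg Subtype.val hw⟩

lemma rightGenDrazinInvertible_of_bijective {T : E →L[ℂ] E} (hT : Bijective T) :
    RightGenDrazinInvertible T := by
  have hTop : Inv T ⊤ := fun _ _ => Submodule.mem_top
  have hBot : Inv T ⊥ := fun x hx => by simp_all
  refine ⟨⊤, ⊥, hTop, hBot, isClosed_univ, isClosed_singleton, isCompl_top_bot,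
    ⟨?_, ⊤, isClosed_univ, ?_⟩, quasiNilpotentOp_of_subsingleton _⟩
  · intro y
    obtain ⟨x, hx⟩ := hT.2 y
    exact ⟨⟨x, Submodule.mem_top⟩, Subtype.ext hx⟩
  · rw [LinearMap.ker_eq_bot.mpr fun a b hab => Subtype.ext (hT.1 (congrArg Subtype.val hab))]
    exact isCompl_bot_top

lemma norm_rightShift {A : H →L[ℂ] H}
    (hA : ∀ (x : H) (n : ℕ), A x n = if n = 0 then 0 else x (n - 1)) (x : H) :
    ‖A x‖ = ‖x‖ := by
  have h := lp.hasSum_norm_sq_succ (A x)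
  simp only [hA, if_neg (Nat.succ_ne_zero _), Nat.add_sub_cancel, if_pos, norm_zero] at h
  have := h.unique (lp.hasSum_norm_sq x)
  exact (sq_eq_sq₀ (norm_nonneg _) (norm_nonneg _)).1 (by simpa using this)

lemma not_surjective_rightShift {A : H →L[ℂ] H}
    (hA : ∀ (x : H) (n : ℕ), A x n = if n = 0 then 0 else x (n - 1)) : ¬ Surjective A := by
  intro hsurj
  obtain ⟨x, hx⟩ := hsurj (lp.single 2 0 1)
  simpa [hA] using congrArg (fun y : H => y 0) hx

lemma norm_blockShift_apply {A B C : H →L[ℂ] H} {M : WithLp 2 (H × H) →L[ℂ] WithLp 2 (H × H)}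
    (hA : ∀ (x : H) (n : ℕ), A x n = if n = 0 then 0 else x (n - 1))
    (hB : ∀ (x : H) (n : ℕ), B x n = x (n + 1))
    (hC : ∀ (x : H) (n : ℕ), C x n = if n = 0 then x 0 else 0)
    (hM : ∀ x : WithLp 2 (H × H),
      WithLp.equiv 2 (H × H) (M x) =
        (A (WithLp.equiv 2 (H × H) x).1 + C (WithLp.equiv 2 (H × H) x).2,
          B (WithLp.equiv 2 (H × H) x).2))
    (x : WithLp 2 (H × H)) : ‖M x‖ = ‖x‖ := by
  have hfst : ‖A x.fst + C x.snd‖ ^ 2 = ‖x.snd 0‖ ^ 2 + ‖x.fst‖ ^ 2 := by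
    have h := lp.hasSum_norm_sq_succ (A x.fst + C x.snd)
    simp only [lp.coeFn_add, Pi.add_apply, hA, hC, Nat.succ_ne_zero, if_false, if_true,
      Nat.add_sub_cancel, add_zero, zero_add] at h
    linarith [h.unique (lp.hasSum_norm_sq x.fst)]
  have hsnd : ‖B x.snd‖ ^ 2 = ‖x.snd‖ ^ 2 - ‖x.snd 0‖ ^ 2 := by
    have h := lp.hasSum_norm_sq (B x.snd)
    simp only [hB] at h
    exact h.unique (lp.hasSum_norm_sq_succ x.snd)
  have hMfst : (M x).fst = A x.fst + C x.snd := congrArg Prod.fst (hM x)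
  have hMsnd : (M x).snd = B x.snd := congrArg Prod.snd (hM x)
  rw [← sq_eq_sq₀ (norm_nonneg _) (norm_nonneg _), WithLp.prod_norm_sq_eq_of_L2,
    WithLp.prod_norm_sq_eq_of_L2, hMfst, hMsnd, hfst, hsnd]
  ring

lemma surjective_blockShift {A B C : H →L[ℂ] H} {M : WithLp 2 (H × H) →L[ℂ] WithLp 2 (H × H)}
    (hA : ∀ (x : H) (n : ℕ), A x n = if n = 0 then 0 else x (n - 1))
    (hB : ∀ (x : H) (n : ℕ), B x n = x (n + 1))
    (hC : ∀ (x : H) (n : ℕ), C x n = if n = 0 then x 0 else 0)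
    (hM : ∀ x : WithLp 2 (H × H),
      WithLp.equiv 2 (H × H) (M x) =
        (A (WithLp.equiv 2 (H × H) x).1 + C (WithLp.equiv 2 (H × H) x).2,
          B (WithLp.equiv 2 (H × H) x).2)) :
    Surjective M := by
  intro z
  refine ⟨WithLp.toLp 2 (B z.fst, C z.fst + A z.snd), (WithLp.equiv 2 (H × H)).injective ?_⟩
  rw [hM]
  refine Prod.ext (lp.ext <| funext fun n => ?_) (lp.ext <| funext fun n => ?_)
  · cases n <;> simp [hA, hB, hC]
  · simp [hA, hB, hC]

theorem stmt16 (A B C : H →L[ℂ] H) (M : WithLp 2 (H × H) →L[ℂ] WithLp 2 (H × H))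
    (hA : ∀ (x : H) (n : ℕ), A x n = if n = 0 then 0 else x (n - 1))
    (hB : ∀ (x : H) (n : ℕ), B x n = x (n + 1))
    (hC : ∀ (x : H) (n : ℕ), C x n = if n = 0 then x 0 else 0)
    (hM : ∀ x : WithLp 2 (H × H),
      WithLp.equiv 2 (H × H) (M x) =
        (A (WithLp.equiv 2 (H × H) x).1 + C (WithLp.equiv 2 (H × H) x).2,
          B (WithLp.equiv 2 (H × H) x).2)) :
    (∀ x, ‖M x‖ = ‖x‖) ∧ Surjective ⇑M ∧
      (0 : ℂ) ∉ sigma_rgD M ∧ (0 : ℂ) ∈ sigma_rgD A ∪ sigma_rgD B := by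
  have hMiso := norm_blockShift_apply hA hB hC hM
  have hMsurj := surjective_blockShift hA hB hC hM
  simp only [sigma_rgD, mem_union, mem_ofPred_eq, zero_smul, sub_zero, not_not]
  refine ⟨hMiso, hMsurj, ?_, Or.inl ?_⟩
  · exact rightGenDrazinInvertible_of_bijective
      ⟨(AddMonoidHomClass.isometry_of_norm M hMiso).injective, hMsurj⟩
  · exact fun h => not_surjective_rightShift hA
      (surjective_of_rightGenDrazinInvertible (norm_rightShift hA) h)

end PseudoBF
end
end

section
/- Let T₀ on ℓ²(ℕ) be defined by T₀(x₁,x₂,…) = (x₁,0,x₂,0,x₃,0,…) and T₂ on ℓ²(ℕ) by T₂(x₁,x₂,…) = (x₂/2, x₃/3, …). Then T₀ is injective with closed range of infinite codimension (hence upper semi-Fredholm but not lower semi-Fredholm), T₂ is quasi-nilpotent, and T = T₀ ⊕ T₂ is pseudo upper semi B-Fredholm. -/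
open Function Set

noncomputable section

namespace PseudoBF

variable {E : Type*} [NormedAddCommGroup E] [NormedSpace ℂ E]

/-! `T0` only relocates coordinates, so `‖x‖ ≤ ‖T0 x‖`: it is injective with closed range, and the
unit vectors at odd positions stay linearly independent modulo its range, since every vector in
the range vanishes there. The power `T2 ^ k` shifts by `k` places with weights of product at most
`1 / k!`, so `‖T2 ^ k‖ ^ (1 / k) → 0` and Gelfand's formula gives spectral radius `0`. Finally
`T0 ⊕ T2` splits along `H × 0` and `0 × H`, where it acts as conjugates of `T0` and `T2`. -/

open Filter
open scoped NNReal ENNReal Nat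

theorem spectralRadius_le_of_eventually_nnnorm_pow_le {A : Type*} [NormedRing A]
    [NormedAlgebra ℂ A] [CompleteSpace A] {a : A} {r : ℝ≥0}
    (h : ∀ᶠ n in atTop, ‖a ^ n‖₊ ≤ r ^ n) : spectralRadius ℂ a ≤ r := by
  refine le_of_tendsto (spectrum.pow_nnnorm_pow_one_div_tendsto_nhds_spectralRadius a) ?_
  filter_upwards [h, eventually_ne_atTop 0] with n hn hn0
  calc (‖a ^ n‖₊ : ℝ≥0∞) ^ (1 / n : ℝ) ≤ ((r : ℝ≥0∞) ^ n) ^ (n⁻¹ : ℝ) := by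
        rw [one_div]; gcongr; exact_mod_cast hn
    _ = r := ENNReal.pow_rpow_inv_natCast hn0 _

theorem spectralRadius_eq_zero_of_norm_pow_le_inv_factorial {A : Type*} [NormedRing A]
    [NormedAlgebra ℂ A] [CompleteSpace A] {a : A} (h : ∀ n, ‖a ^ n‖ ≤ (n ! : ℝ)⁻¹) :
    spectralRadius ℂ a = 0 := by
  refine le_antisymm (ENNReal.le_of_forall_pos_le_add fun r hr _ => ?_) bot_le
  rw [zero_add]
  refine spectralRadius_le_of_eventually_nnnorm_pow_le ?_
  have hsmall := (FloorSemiring.tendsto_pow_div_factorial_atTop ((r : ℝ)⁻¹)).eventually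
    (ge_mem_nhds zero_lt_one)
  filter_upwards [hsmall] with n hn
  rw [← NNReal.coe_le_coe, coe_nnnorm, NNReal.coe_pow]
  refine (h n).trans ?_
  have hr' : (0 : ℝ) < r := hr
  rw [inv_pow, div_le_one (by positivity)] at hn
  rwa [inv_le_comm₀ (by positivity) (by positivity)]

theorem lp_norm_le_of_norm_apply_le {ι κ G G' : Type*} [NormedAddCommGroup G]
    [NormedAddCommGroup G'] {p : ℝ≥0∞} [Fact (1 ≤ p)] (hp : 0 < p.toReal)
    {x : lp (fun _ : ι => G) p} {y : lp (fun _ : κ => G') p} {f : κ → ι} (hf : Injective f) {c : ℝ} (hc : 0 ≤ c)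
    (h : ∀ k, ‖y k‖ ≤ c * ‖x (f k)‖) : ‖y‖ ≤ c * ‖x‖ := by
  refine lp.norm_le_of_tsum_le hp (mul_nonneg hc (norm_nonneg x)) ?_
  have hx := (lp.memℓp x).summable hp
  calc ∑' k, ‖y k‖ ^ p.toReal ≤ ∑' k, c ^ p.toReal * ‖x (f k)‖ ^ p.toReal := by
        refine Summable.tsum_le_tsum (fun k => ?_) ((lp.memℓp y).summable hp)
          ((hx.comp_injective hf).mul_left _)
        rw [← Real.mul_rpow hc (norm_nonneg _)]
        exact Real.rpow_le_rpow (norm_nonneg _) (h k) hp.le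
    _ = c ^ p.toReal * ∑' k, ‖x (f k)‖ ^ p.toReal := tsum_mul_left
    _ ≤ c ^ p.toReal * ∑' i, ‖x i‖ ^ p.toReal := by
        gcongr
        exact tsum_comp_le_tsum_of_inj hx (fun _ => by positivity) hf
    _ = (c * ‖x‖) ^ p.toReal := by
        rw [Real.mul_rpow hc (norm_nonneg x), lp.norm_rpow_eq_tsum hp x]

theorem upperSemiFredholm_of_antilipschitz [CompleteSpace E] {T : E →L[ℂ] E} {K : ℝ≥0}
    (hT : AntilipschitzWith K T) : UpperSemiFredholm T := by
  refine ⟨?_, hT.isClosed_range T.uniformContinuous⟩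
  rw [LinearMap.ker_eq_bot.mpr hT.injective]
  infer_instance

theorem not_finiteDimensional_quotient_of_linearIndependent {K V W ι : Type*} [Field K]
    [AddCommGroup V] [Module K V] [AddCommGroup W] [Module K W] [Infinite ι]
    {p : Submodule K V} (f : V →ₗ[K] W) (hpf : p ≤ LinearMap.ker f) {v : ι → V}
    (hv : LinearIndependent K (f ∘ v)) : ¬ FiniteDimensional K (V ⧸ p) := fun _ =>
  Module.Finite.not_linearIndependent_of_infinite (p.mkQ ∘ v)
    (LinearIndependent.of_comp (p.liftQ f hpf) hv)

theorem not_finiteDimensional_quotient_range_of_apply_odd_eq_zero (T : H →L[ℂ] H)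
    (hT : ∀ x n, T x (2 * n + 1) = 0) :
    ¬ FiniteDimensional ℂ (H ⧸ LinearMap.range (T : H →ₗ[ℂ] H)) := by
  let oddCoords : H →ₗ[ℂ] ℕ → ℂ := LinearMap.pi fun n => lp.evalₗ _ 2 (2 * n + 1)
  refine not_finiteDimensional_quotient_of_linearIndependent oddCoords ?_
    (v := fun n => lp.single 2 (2 * n + 1) (1 : ℂ)) ?_
  · rintro _ ⟨x, rfl⟩
    ext n
    exact hT x n
  · have hsingle : oddCoords ∘ (fun n => lp.single 2 (2 * n + 1) (1 : ℂ)) =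
        fun n => Pi.single n 1 := by
      funext n m
      simp [oddCoords, lp.single_apply, Pi.single_apply]
    rw [hsingle]
    exact Pi.linearIndependent_single_one ℕ ℂ

theorem norm_pow_apply_le_of_norm_apply_le {T : H →L[ℂ] H}
    (hT : ∀ x n, ‖T x n‖ ≤ ‖x (n + 1)‖ / (n + 1)) (k : ℕ) (x : H) (n : ℕ) :
    ‖(T ^ k) x n‖ ≤ (k ! : ℝ)⁻¹ * ‖x (n + k)‖ := by
  induction k generalizing x with
  | zero => simp
  | succ k ih =>
    rw [pow_succ, mul_apply_eq_comp]
    refine (ih (T x)).trans ?_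
    have hTx := hT x (n + k)
    rw [Nat.factorial_succ, ← add_assoc]
    push_cast at hTx ⊢
    calc (k ! : ℝ)⁻¹ * ‖T x (n + k)‖ ≤ (k ! : ℝ)⁻¹ * (‖x (n + k + 1)‖ / (n + k + 1)) := by gcongr
      _ ≤ (k ! : ℝ)⁻¹ * (‖x (n + k + 1)‖ / (k + 1)) := by gcongr; linarith [n.cast_nonneg (α := ℝ)]
      _ = ((k + 1) * k ! : ℝ)⁻¹ * ‖x (n + k + 1)‖ := by rw [mul_inv]; ring

theorem norm_pow_le_inv_factorial_of_norm_apply_le {T : H →L[ℂ] H}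
    (hT : ∀ x n, ‖T x n‖ ≤ ‖x (n + 1)‖ / (n + 1)) (k : ℕ) : ‖T ^ k‖ ≤ (k ! : ℝ)⁻¹ :=
  ContinuousLinearMap.opNorm_le_bound _ (by positivity) fun x =>
    lp_norm_le_of_norm_apply_le (by norm_num) (add_left_injective k) (by positivity)
      (norm_pow_apply_le_of_norm_apply_le hT k x)

theorem quasiNilpotentOp_of_norm_apply_le {T : H →L[ℂ] H}
    (hT : ∀ x n, ‖T x n‖ ≤ ‖x (n + 1)‖ / (n + 1)) : QuasiNilpotentOp T :=
  spectralRadius_eq_zero_of_norm_pow_le_inv_factorial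
    (norm_pow_le_inv_factorial_of_norm_apply_le hT)

section DirectSum

variable {F : Type*} [NormedAddCommGroup F] [NormedSpace ℂ F]

theorem UpperSemiFredholm.conj {S : E →L[ℂ] E} (hS : UpperSemiFredholm S) (e : E ≃L[ℂ] F) :
    UpperSemiFredholm (e.conjContinuousAlgEquiv S) := by
  obtain ⟨hker, hrange⟩ := hS
  have hker' : LinearMap.ker (e.conjContinuousAlgEquiv S : F →ₗ[ℂ] F) =
      (LinearMap.ker (S : E →ₗ[ℂ] E)).map (e : E →ₗ[ℂ] F) := by
    ext y
    simp
  have hrange' : (LinearMap.range (e.conjContinuousAlgEquiv S : F →ₗ[ℂ] F) : Set F) =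
      e '' (LinearMap.range (S : E →ₗ[ℂ] E)) := by
    ext y
    simp [e.symm.surjective.exists, ContinuousLinearEquiv.eq_symm_apply]
  refine ⟨?_, ?_⟩
  · rw [hker']; infer_instance
  · rw [hrange']; exact e.toHomeomorph.isClosedMap _ hrange

theorem QuasiNilpotentOp.conj {S : E →L[ℂ] E} (hS : QuasiNilpotentOp S) (e : E ≃L[ℂ] F) :
    QuasiNilpotentOp (e.conjContinuousAlgEquiv S) := by
  rw [QuasiNilpotentOp, spectralRadius, AlgEquiv.spectrum_eq]
  exact hS

variable (E F) in
def fstContinuousEquiv : Submodule.fst ℂ E F ≃L[ℂ] E :=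
  { Submodule.fstEquiv ℂ E F with
    continuous_toFun := continuous_fst.comp continuous_subtype_val
    continuous_invFun := (continuous_id.prodMk continuous_const).subtype_mk _ }

variable (E F) in
def sndContinuousEquiv : Submodule.snd ℂ E F ≃L[ℂ] F :=
  { Submodule.sndEquiv ℂ E F with
    continuous_toFun := continuous_snd.comp continuous_subtype_val
    continuous_invFun := (continuous_const.prodMk continuous_id).subtype_mk _ }

theorem inv_prodMap_fst (S : E →L[ℂ] E) (R : F →L[ℂ] F) :
    Inv (S.prodMap R) (Submodule.fst ℂ E F) := by
  intro p hp
  simp_all [Submodule.fst]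

theorem inv_prodMap_snd (S : E →L[ℂ] E) (R : F →L[ℂ] F) :
    Inv (S.prodMap R) (Submodule.snd ℂ E F) := by
  intro p hp
  simp_all [Submodule.snd]

theorem restr_prodMap_fst (S : E →L[ℂ] E) (R : F →L[ℂ] F) :
    restr (S.prodMap R) (inv_prodMap_fst S R) =
      (fstContinuousEquiv E F).symm.conjContinuousAlgEquiv S := by
  ext ⟨⟨x, y⟩, hy⟩
  · rfl
  · simp only [Submodule.fst, Submodule.mem_comap, LinearMap.snd_apply, Submodule.mem_bot] at hy
    change R y = 0
    rw [hy, map_zero]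

theorem restr_prodMap_snd (S : E →L[ℂ] E) (R : F →L[ℂ] F) :
    restr (S.prodMap R) (inv_prodMap_snd S R) =
      (sndContinuousEquiv E F).symm.conjContinuousAlgEquiv R := by
  ext ⟨⟨x, y⟩, hx⟩
  · simp only [Submodule.snd, Submodule.mem_comap, LinearMap.fst_apply, Submodule.mem_bot] at hx
    change S x = 0
    rw [hx, map_zero]
  · rfl

theorem pseudoUpperSemiBFredholm_prodMap {S : E →L[ℂ] E} {R : F →L[ℂ] F}
    (hS : UpperSemiFredholm S) (hR : QuasiNilpotentOp R) :
    PseudoUpperSemiBFredholm (S.prodMap R) := by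
  refine ⟨_, _, inv_prodMap_fst S R, inv_prodMap_snd S R,
    (ContinuousLinearMap.snd ℂ E F).isClosed_ker, (ContinuousLinearMap.fst ℂ E F).isClosed_ker,
    ⟨disjoint_iff.mpr (Submodule.fst_inf_snd ..), codisjoint_iff.mpr (Submodule.fst_sup_snd ..)⟩,
    ?_, ?_⟩
  · rw [restr_prodMap_fst]; exact hS.conj _
  · rw [restr_prodMap_snd]; exact hR.conj _

end DirectSum

theorem stmt19 (T0 T2 : H →L[ℂ] H)
    (hT0 : ∀ (x : H) (n : ℕ), T0 x n = if n % 2 = 0 then x (n / 2) else 0)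
    (hT2 : ∀ (x : H) (n : ℕ), T2 x n = x (n + 1) / ((n : ℂ) + 2)) :
    Injective ⇑T0 ∧ IsClosed (LinearMap.range (T0 : H →ₗ[ℂ] H) : Set H) ∧
      ¬ FiniteDimensional ℂ (H ⧸ LinearMap.range (T0 : H →ₗ[ℂ] H)) ∧
      UpperSemiFredholm T0 ∧ ¬ LowerSemiFredholm T0 ∧
      QuasiNilpotentOp T2 ∧ PseudoUpperSemiBFredholm (T0.prodMap T2) := by
  have hT0_anti : AntilipschitzWith 1 T0 := T0.antilipschitz_of_bound fun x => by
    simpa using lp_norm_le_of_norm_apply_le (x := T0 x) (y := x) (by norm_num)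
      (mul_right_injective₀ two_ne_zero) zero_le_one fun n => by
        rw [one_mul, hT0, if_pos (by omega), Nat.mul_div_cancel_left n two_pos]
  have hT0_codim : ¬ FiniteDimensional ℂ (H ⧸ LinearMap.range (T0 : H →ₗ[ℂ] H)) :=
    not_finiteDimensional_quotient_range_of_apply_odd_eq_zero T0 fun x n => by
      rw [hT0, if_neg (by omega)]
  have hT2_qn : QuasiNilpotentOp T2 := quasiNilpotentOp_of_norm_apply_le fun x n => by
    have hnorm : ‖(n : ℂ) + 2‖ = n + 2 := by exact_mod_cast Complex.norm_natCast (n + 2)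
    rw [hT2, norm_div, hnorm]
    gcongr
    linarith
  have hT0_usf := upperSemiFredholm_of_antilipschitz hT0_anti
  exact ⟨hT0_anti.injective, hT0_anti.isClosed_range T0.uniformContinuous, hT0_codim, hT0_usf,
    hT0_codim, hT2_qn, pseudoUpperSemiBFredholm_prodMap hT0_usf hT2_qn⟩

end PseudoBF
end
end
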